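/- For all integers n ≥ 1, t ≥ 0 and x with 0 ≤ x ≤ n, the probability that the simple random walk on ℤ started at x does not hit {0, n} up to time t is h_n(x,t) = (2/n) Σ_{j=1}^{⌊n/2⌋} cos^t( π(2j−1)/n ) · cot( π(2j−1)/(2n) ) · sin( πx(2j−1)/n ). -/

import Mathlib

open MeasureTheory ProbabilityTheory Finset Filter
open scoped ENNReal Topology

/-- One step transition probability of the simple random walk on `ℤ`. -/
noncomputable def srwStep (u v : ℤ) : ℝ≥0∞ :=
  if v = u + 1 ∨ v = u - 1 then (1 : ℝ≥0∞) / 2 else 0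

/-- `P x` is the law of the simple random walk `S` on `ℤ` started at `x`:
for every finite path `γ` with `γ 0 = x`, the probability of following `γ`
during the first `t` steps is the product of the one-step transition
probabilities. -/
def IsSRW {Ω : Type*} [MeasurableSpace Ω] (P : ℤ → Measure Ω) (S : ℕ → Ω → ℤ) : Prop :=
  (∀ x, IsProbabilityMeasure (P x)) ∧ (∀ t, Measurable (S t)) ∧
    ∀ (x : ℤ) (t : ℕ) (γ : ℕ → ℤ), γ 0 = x →
      P x {ω | ∀ s ≤ t, S s ω = γ s} = ∏ s ∈ Finset.range t, srwStep (γ s) (γ (s + 1))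

/-!
Both sides, as functions `u(x, t)` on `0 ≤ x ≤ n`, solve the discrete heat equation
`u(x, t+1) = (u(x-1, t) + u(x+1, t)) / 2` for `0 < x < n`, vanish at `x = 0` and `x = n`, and
equal `1` at `t = 0` for `0 < x < n`; such a solution is unique.

For the probability, the walk up to time `t` follows each of the `2^t` sequences of `±1` steps with
probability `2^{-t}`, and these paths exhaust the walk almost surely; splitting off the first step
gives the recursion. For the formula, every mode `cos^t θ · sin(xθ)` solves the heat equation. At
`t = 0`, symmetrising over all `θ_k = π(2k+1)/n`, `k < n`, and telescoping with
`cot(θ/2) (sin((x+1)θ) - sin(xθ)) = cos(xθ) + cos((x+1)θ)` reduces the formula to the sums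
`∑_k cos(mθ_k)`, which are `n` for `m = 0` and `0` for `0 < m < n`.
-/

def boolStep (b : Bool) : ℤ := if b then 1 else -1

/-- The path from `x` whose `i`-th step is `boolStep (ε i)`; it is constant after time `t`. -/
def signPath : {t : ℕ} → ℤ → (Fin t → Bool) → ℕ → ℤ
  | 0, x, _, _ => x
  | _ + 1, x, _, 0 => x
  | _ + 1, x, ε, s + 1 => signPath (x + boolStep (ε 0)) (Fin.tail ε) s

namespace signPath

@[simp] lemma zero_right {t : ℕ} (x : ℤ) (ε : Fin t → Bool) : signPath x ε 0 = x := by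
  cases t <;> rfl

@[simp] lemma cons_succ {t : ℕ} (x : ℤ) (b : Bool) (ε : Fin t → Bool) (s : ℕ) :
    signPath x (Fin.cons b ε) (s + 1) = signPath (x + boolStep b) ε s := by
  simp [signPath]

lemma srwStep_eq {t : ℕ} (x : ℤ) (ε : Fin t → Bool) {s : ℕ} (hs : s < t) :
    srwStep (signPath x ε s) (signPath x ε (s + 1)) = 2⁻¹ := by
  induction t generalizing x s with
  | zero => omega
  | succ t ih =>
    cases ε using Fin.consCases with
    | cons b ε =>
      rcases s with _ | s
      · cases b <;> simp [srwStep, boolStep, sub_eq_add_neg]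
      · simpa using ih (x + boolStep b) ε (by omega)

lemma injective {t : ℕ} (x : ℤ) {ε ε' : Fin t → Bool}
    (h : ∀ s ≤ t, signPath x ε s = signPath x ε' s) : ε = ε' := by
  induction t generalizing x with
  | zero => exact Subsingleton.elim _ _
  | succ t ih =>
    cases ε using Fin.consCases with
    | cons b ε =>
    cases ε' using Fin.consCases with
    | cons b' ε' =>
    have hb : b = b' := by
      have h1 := h 1 le_add_self
      simp only [cons_succ, zero_right, add_right_inj] at h1
      cases b <;> cases b' <;> simp [boolStep] at h1 ⊢
    subst hb
    exact congrArg _ (ih (x + boolStep b) fun s hs ↦ by simpa using h (s + 1) (by omega))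

end signPath

lemma Nat.forall_le_succ_left {p : ℕ → Prop} {t : ℕ} :
    (∀ s ≤ t + 1, p s) ↔ p 0 ∧ ∀ s ≤ t, p (s + 1) := by
  simp only [← Nat.lt_succ_iff]
  exact Nat.forall_lt_succ_left

open Classical in
noncomputable def stayProb (D : Set ℤ) (x : ℤ) (t : ℕ) : ℝ :=
  ∑ ε : Fin t → Bool, if ∀ s ≤ t, signPath x ε s ∈ D then (2⁻¹ : ℝ) ^ t else 0

lemma stayProb_zero (D : Set ℤ) (x : ℤ) : stayProb D x 0 = D.indicator 1 x := by
  classical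
  rw [stayProb, Fintype.sum_unique]
  simp [Set.indicator_apply]

lemma stayProb_succ (D : Set ℤ) (x : ℤ) (t : ℕ) :
    stayProb D x (t + 1) =
      D.indicator (fun y ↦ (stayProb D (y - 1) t + stayProb D (y + 1) t) / 2) x := by
  classical
  rw [stayProb, ← (Fin.consEquiv fun _ ↦ Bool).sum_comp, Fintype.sum_prod_type,
    Fintype.sum_bool]
  simp only [Fin.consEquiv, Equiv.coe_fn_mk, Nat.forall_le_succ_left, signPath.zero_right,
    signPath.cons_succ]
  by_cases hx : x ∈ D
  · simp only [hx, Set.indicator_of_mem, true_and, stayProb, boolStep, Bool.false_eq_true,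
      if_true, if_false, ← sub_eq_add_neg, add_div, sum_div, ite_div, zero_div, pow_succ]
    ring_nf
  · simp [hx]

lemma stayProb_of_notMem {D : Set ℤ} {x : ℤ} (hx : x ∉ D) (t : ℕ) : stayProb D x t = 0 := by
  cases t with
  | zero => rw [stayProb_zero, Set.indicator_of_notMem hx]
  | succ t => rw [stayProb_succ, Set.indicator_of_notMem hx]

section Law

open Function

lemma pairwise_disjoint_signPath {Ω : Type*} (S : ℕ → Ω → ℤ) (x : ℤ) (t : ℕ) :
    Pairwise (Disjoint on
      fun ε : Fin t → Bool ↦ {ω | ∀ s ≤ t, S s ω = signPath x ε s}) :=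
  fun _ _ hne ↦ Set.disjoint_left.2 fun _ hω hω' ↦
    hne (signPath.injective x fun s hs ↦ (hω s hs).symm.trans (hω' s hs))

variable {Ω : Type*} [MeasurableSpace Ω] {P : ℤ → Measure Ω} {S : ℕ → Ω → ℤ}

lemma measurableSet_forall_le_mem (hS : ∀ s, Measurable (S s)) (t : ℕ) (B : ℕ → Set ℤ) :
    MeasurableSet {ω | ∀ s ≤ t, S s ω ∈ B s} := by
  simp only [Set.ofPred_forall]
  exact .iInter fun s ↦ .iInter fun _ ↦ hS s .of_discrete

lemma IsSRW.measure_signPath (hS : IsSRW P S) (x : ℤ) {t : ℕ} (ε : Fin t → Bool) :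
    P x {ω | ∀ s ≤ t, S s ω = signPath x ε s} = 2⁻¹ ^ t := by
  rw [hS.2.2 x t _ (signPath.zero_right x ε),
    prod_congr rfl fun s hs ↦ signPath.srwStep_eq x ε (mem_range.1 hs), prod_const, card_range]

lemma IsSRW.measure_iUnion_signPath (hS : IsSRW P S) (x : ℤ) (t : ℕ) :
    P x (⋃ ε : Fin t → Bool, {ω | ∀ s ≤ t, S s ω = signPath x ε s}) = 1 := by
  rw [measure_iUnion (pairwise_disjoint_signPath S x t)
      fun ε ↦ measurableSet_forall_le_mem hS.2.1 t fun s ↦ {signPath x ε s},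
    tsum_fintype, sum_congr rfl fun ε _ ↦ hS.measure_signPath x ε, sum_const, card_univ]
  simp [← mul_pow, ENNReal.mul_inv_cancel]

lemma IsSRW.measure_inter_signPath (hS : IsSRW P S) (D : Set ℤ) (x : ℤ) {t : ℕ}
    (ε : Fin t → Bool) [Decidable (∀ s ≤ t, signPath x ε s ∈ D)] :
    P x ({ω | ∀ s ≤ t, S s ω ∈ D} ∩ {ω | ∀ s ≤ t, S s ω = signPath x ε s}) =
      ENNReal.ofReal (if ∀ s ≤ t, signPath x ε s ∈ D then (2⁻¹ : ℝ) ^ t else 0) := by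
  split_ifs with h
  · rw [Set.inter_eq_right.2 fun ω hω s hs ↦ (hω s hs) ▸ h s hs, hS.measure_signPath,
      ENNReal.ofReal_pow (by norm_num), ENNReal.ofReal_inv_of_pos two_pos, ENNReal.ofReal_ofNat]
  · obtain ⟨s, hs, hsD⟩ := by simpa only [not_forall] using h
    rw [ENNReal.ofReal_zero, Set.disjoint_iff_inter_eq_empty.1 ?_, measure_empty]
    exact Set.disjoint_left.2 fun ω hω hω' ↦ hsD ((hω' s hs) ▸ hω s hs)

lemma IsSRW.measure_forall_le_mem (hS : IsSRW P S) (D : Set ℤ) (x : ℤ) (t : ℕ) :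
    P x {ω | ∀ s ≤ t, S s ω ∈ D} = ENNReal.ofReal (stayProb D x t) := by
  classical
  have := hS.1 x
  have hC (ε : Fin t → Bool) : MeasurableSet {ω | ∀ s ≤ t, S s ω = signPath x ε s} :=
    measurableSet_forall_le_mem hS.2.1 t fun s ↦ {signPath x ε s}
  have hnull : P x (⋃ ε : Fin t → Bool, {ω | ∀ s ≤ t, S s ω = signPath x ε s})ᶜ = 0 :=
    (prob_compl_eq_zero_iff (.iUnion hC)).2 (hS.measure_iUnion_signPath x t)
  rw [← measure_inter_conull hnull, Set.inter_iUnion,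
    measure_iUnion (fun ε ε' hne ↦ (pairwise_disjoint_signPath S x t hne).mono
      Set.inter_subset_right Set.inter_subset_right)
      fun ε ↦ (measurableSet_forall_le_mem hS.2.1 t fun _ ↦ D).inter (hC ε),
    tsum_fintype, stayProb, ENNReal.ofReal_sum_of_nonneg fun _ _ ↦ by positivity]
  exact sum_congr rfl fun ε _ ↦ hS.measure_inter_signPath D x ε

end Law

theorem Finset.sum_range_eq_two_nsmul_sum_range_half {M : Type*} [AddCommMonoid M] {n : ℕ}
    {f : ℕ → M} (hf : ∀ k < n, f (n - 1 - k) = f k) (hmid : Odd n → f (n / 2) = 0) :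
    ∑ k ∈ range n, f k = 2 • ∑ k ∈ range (n / 2), f k := by
  obtain ⟨m, rfl | rfl⟩ := Nat.even_or_odd' n
  · have hsnd : ∑ k ∈ range m, f (m + k) = ∑ k ∈ range m, f k := by
      rw [← sum_range_reflect f m]
      refine sum_congr rfl fun k hk ↦ ?_
      rw [← hf (m - 1 - k) (by grind)]
      congr 1
      grind
    rw [Nat.mul_div_cancel_left m two_pos, two_mul, sum_range_add, hsnd, two_nsmul]
  · have hsnd : ∑ k ∈ range m, f (m + (k + 1)) = ∑ k ∈ range m, f k := by
      rw [← sum_range_reflect f m]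
      refine sum_congr rfl fun k hk ↦ ?_
      rw [← hf (m - 1 - k) (by grind)]
      congr 1
      grind
    have hhalf : (2 * m + 1) / 2 = m := by omega
    rw [hhalf] at hmid
    rw [hhalf, show 2 * m + 1 = m + (m + 1) by ring, sum_range_add, sum_range_succ', hsnd,
      add_zero, hmid (odd_two_mul_add_one m), add_zero, two_nsmul]

section Spectral

open Real

lemma Real.cot_pi_sub (x : ℝ) : cot (π - x) = -cot x := by
  rw [cot_eq_cos_div_sin, cot_eq_cos_div_sin, cos_pi_sub, sin_pi_sub, neg_div]

noncomputable def oddFreq (n k : ℕ) : ℝ := π * (2 * k + 1) / n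

lemma sin_half_oddFreq_pos {n k : ℕ} (hk : k < n) : 0 < sin (oddFreq n k / 2) := by
  have hn : (0 : ℝ) < n := by exact_mod_cast k.zero_le.trans_lt hk
  have hk' : (2 * k + 1 : ℝ) < 2 * n := by exact_mod_cast (by omega : 2 * k + 1 < 2 * n)
  apply sin_pos_of_pos_of_lt_pi
  · unfold oddFreq; positivity
  · rw [oddFreq, div_div, div_lt_iff₀ (by positivity)]
    nlinarith [pi_pos]

lemma oddFreq_reflect {n k : ℕ} (hk : k < n) : oddFreq n (n - 1 - k) = 2 * π - oddFreq n k := by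
  have hn : (n : ℝ) ≠ 0 := Nat.cast_ne_zero.2 (by omega)
  rw [oddFreq, oddFreq, Nat.cast_sub (by omega), Nat.cast_sub (by omega)]
  field_simp
  push_cast
  ring

lemma oddFreq_half {n : ℕ} (hn : Odd n) : oddFreq n (n / 2) = π := by
  obtain ⟨m, rfl⟩ := hn
  rw [oddFreq, Nat.mul_add_div two_pos, Nat.div_eq_of_lt one_lt_two, add_zero]
  field_simp
  push_cast
  ring

lemma sum_range_cos_mul_oddFreq {n m : ℕ} (hm : ¬ n ∣ m) :
    ∑ k ∈ range n, cos (m * oddFreq n k) = 0 := by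
  rcases n.eq_zero_or_pos with rfl | hn
  · simp
  have hn : (n : ℝ) ≠ 0 := by positivity
  have hsin : sin (π * m / n) ≠ 0 := by
    rw [Ne, sin_eq_zero_iff]
    rintro ⟨j, hj⟩
    field_simp at hj
    exact hm (Int.natCast_dvd_natCast.1 ⟨j, by rw [mul_comm]; exact_mod_cast hj.symm⟩)
  -- multiplied by `2 sin(πm/n)`, the sum telescopes to `sin(2πm) - sin 0`
  have htel (k : ℕ) : 2 * sin (π * m / n) * cos (m * oddFreq n k) =
      sin (2 * π * m * (k + 1 : ℕ) / n) - sin (2 * π * m * k / n) := by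
    have hsub : (2 * π * m * (k + 1 : ℕ) / n - 2 * π * m * k / n) / 2 = π * m / n := by
      push_cast; ring
    have hadd : (2 * π * m * (k + 1 : ℕ) / n + 2 * π * m * k / n) / 2 = m * oddFreq n k := by
      rw [oddFreq]; push_cast; ring
    rw [sin_sub_sin, hsub, hadd]
  apply (mul_right_inj' (mul_ne_zero two_ne_zero hsin)).1
  rw [mul_sum, sum_congr rfl fun k _ ↦ htel k,
    sum_range_sub (fun k : ℕ ↦ sin (2 * π * m * k / n))]
  have : 2 * π * m * n / n = (2 * m : ℕ) * π := by field_simp; push_cast; ring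
  rw [this, sin_nat_mul_pi, Nat.cast_zero, mul_zero, zero_div, sin_zero, sub_zero, mul_zero]

lemma cot_mul_sin_add_one_sub (θ x : ℝ) (h : sin (θ / 2) ≠ 0) :
    cot (θ / 2) * sin ((x + 1) * θ) - cot (θ / 2) * sin (x * θ) =
      cos (x * θ) + cos ((x + 1) * θ) := by
  have hsub : ((x + 1) * θ - x * θ) / 2 = θ / 2 := by ring
  have hadd : ((x + 1) * θ + x * θ) / 2 = (x * θ + (x + 1) * θ) / 2 := by ring
  have hneg : (x * θ - (x + 1) * θ) / 2 = -(θ / 2) := by ring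
  rw [← mul_sub, sin_sub_sin, cos_add_cos, hsub, hadd, hneg, cos_neg, cot_eq_cos_div_sin]
  field_simp

lemma sum_cot_mul_sin_succ_sub (n x : ℕ) :
    ∑ k ∈ range n, cot (oddFreq n k / 2) * sin ((x + 1 : ℕ) * oddFreq n k) -
        ∑ k ∈ range n, cot (oddFreq n k / 2) * sin (x * oddFreq n k) =
      ∑ k ∈ range n, cos (x * oddFreq n k) +
        ∑ k ∈ range n, cos ((x + 1 : ℕ) * oddFreq n k) := by
  rw [← sum_sub_distrib, ← sum_add_distrib]
  refine sum_congr rfl fun k hk ↦ ?_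
  push_cast
  exact cot_mul_sin_add_one_sub _ _ (sin_half_oddFreq_pos (mem_range.1 hk)).ne'

lemma sum_cot_mul_sin_eq {n x : ℕ} (hx : 0 < x) (hxn : x < n) :
    ∑ k ∈ range n, cot (oddFreq n k / 2) * sin (x * oddFreq n k) = n := by
  induction x, hx using Nat.le_induction with
  | base =>
    have h := sum_cot_mul_sin_succ_sub n 0
    simp only [Nat.cast_zero, zero_mul, sin_zero, mul_zero, sum_const_zero, sub_zero, cos_zero,
      sum_const, card_range, nsmul_eq_mul, mul_one, zero_add] at h
    rw [h, sum_range_cos_mul_oddFreq (Nat.not_dvd_of_pos_of_lt one_pos hxn), add_zero]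
  | succ x hx ih =>
    have h := sum_cot_mul_sin_succ_sub n x
    rw [ih (by omega), sum_range_cos_mul_oddFreq (Nat.not_dvd_of_pos_of_lt hx (by omega)),
      sum_range_cos_mul_oddFreq (Nat.not_dvd_of_pos_of_lt (by omega) hxn)] at h
    linarith

noncomputable def spectralStayProb (n : ℕ) (x : ℤ) (t : ℕ) : ℝ :=
  (n : ℝ)⁻¹ * ∑ k ∈ range n,
    cos (oddFreq n k) ^ t * cot (oddFreq n k / 2) * sin (x * oddFreq n k)

lemma spectralStayProb_succ (n : ℕ) (x : ℤ) (t : ℕ) :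
    spectralStayProb n x (t + 1) =
      (spectralStayProb n (x - 1) t + spectralStayProb n (x + 1) t) / 2 := by
  simp only [spectralStayProb, ← mul_add, ← sum_add_distrib, mul_div_assoc, sum_div]
  congr 1
  refine sum_congr rfl fun k _ ↦ ?_
  have h := sin_add (x * oddFreq n k) (oddFreq n k)
  have h' := sin_sub (x * oddFreq n k) (oddFreq n k)
  push_cast
  rw [sub_mul, add_mul, one_mul, h, h', pow_succ]
  ring

lemma spectralStayProb_zero_left (n t : ℕ) : spectralStayProb n 0 t = 0 := by
  simp [spectralStayProb]

lemma spectralStayProb_self_left (n t : ℕ) : spectralStayProb n n t = 0 := by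
  rcases n.eq_zero_or_pos with rfl | hn
  · simp [spectralStayProb]
  have h (k : ℕ) : (n : ℝ) * oddFreq n k = (2 * k + 1 : ℕ) * π := by
    rw [oddFreq]; push_cast; field_simp
  simp only [spectralStayProb, Int.cast_natCast, h, sin_nat_mul_pi, mul_zero, sum_const_zero]

lemma spectralStayProb_zero_right {n : ℕ} {x : ℤ} (hx : 0 < x) (hxn : x < n) :
    spectralStayProb n x 0 = 1 := by
  lift x to ℕ using hx.le
  have hn : (n : ℝ) ≠ 0 := Nat.cast_ne_zero.2 (by omega)
  simp only [spectralStayProb, pow_zero, one_mul, Int.cast_natCast]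
  rw [sum_cot_mul_sin_eq (by omega) (by omega), inv_mul_cancel₀ hn]

lemma spectralStayProb_eq_sum_Icc (n : ℕ) (x : ℤ) (t : ℕ) :
    spectralStayProb n x t = (2 / (n : ℝ)) * ∑ j ∈ Icc 1 (n / 2),
      cos (π * (2 * (j : ℝ) - 1) / n) ^ t * cot (π * (2 * (j : ℝ) - 1) / (2 * n))
        * sin (π * (x : ℝ) * (2 * (j : ℝ) - 1) / n) := by
  set F : ℕ → ℝ := fun k ↦
    cos (oddFreq n k) ^ t * cot (oddFreq n k / 2) * sin (x * oddFreq n k)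
  have hsym : ∀ k < n, F (n - 1 - k) = F k := by
    intro k hk
    have hsin : sin (x * (2 * π - oddFreq n k)) = -sin (x * oddFreq n k) := by
      rw [mul_sub, sin_int_mul_two_pi_sub]
    simp only [F, oddFreq_reflect hk, cos_two_pi_sub, hsin, sub_div,
      show 2 * π / 2 = π by ring, cot_pi_sub]
    ring
  have hmid (hn : Odd n) : F (n / 2) = 0 := by
    simp only [F, oddFreq_half hn, sin_int_mul_pi, mul_zero]
  rw [spectralStayProb, sum_range_eq_two_nsmul_sum_range_half hsym hmid, nsmul_eq_mul,
    ← mul_assoc, inv_mul_eq_div, Nat.cast_ofNat, ← Ico_add_one_right_eq_Icc,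
    sum_Ico_eq_sum_range, Nat.add_sub_cancel]
  refine congrArg _ (sum_congr rfl fun k _ ↦ ?_)
  simp only [F, oddFreq]
  push_cast
  ring_nf

end Spectral

theorem eq_of_discreteHeat {n : ℤ} {u v : ℤ → ℕ → ℝ}
    (hu : ∀ x t, 0 < x → x < n → u x (t + 1) = (u (x - 1) t + u (x + 1) t) / 2)
    (hv : ∀ x t, 0 < x → x < n → v x (t + 1) = (v (x - 1) t + v (x + 1) t) / 2)
    (h_init : ∀ x, 0 ≤ x → x ≤ n → u x 0 = v x 0) (h_left : ∀ t, u 0 t = v 0 t)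
    (h_right : ∀ t, u n t = v n t) (t : ℕ) {x : ℤ} (hx0 : 0 ≤ x) (hxn : x ≤ n) :
    u x t = v x t := by
  induction t generalizing x with
  | zero => exact h_init x hx0 hxn
  | succ t ih =>
    obtain rfl | hx0 := hx0.eq_or_lt
    · exact h_left _
    obtain rfl | hxn := hxn.eq_or_lt
    · exact h_right _
    rw [hu x t hx0 hxn, hv x t hx0 hxn, ih (by omega) (by omega), ih (by omega) (by omega)]

lemma stayProb_eq_spectralStayProb (n t : ℕ) {x : ℤ} (hx0 : 0 ≤ x) (hxn : x ≤ n) :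
    stayProb {0, (n : ℤ)}ᶜ x t = spectralStayProb n x t := by
  have h_mem {y : ℤ} (hy0 : 0 < y) (hyn : y < n) : y ∈ ({0, (n : ℤ)} : Set ℤ)ᶜ := by
    simp only [Set.mem_compl_iff, Set.mem_insert_iff, Set.mem_singleton_iff, not_or]
    omega
  have h_left (s : ℕ) : stayProb {0, (n : ℤ)}ᶜ 0 s = spectralStayProb n 0 s := by
    rw [stayProb_of_notMem (by simp), spectralStayProb_zero_left]
  have h_right (s : ℕ) : stayProb {0, (n : ℤ)}ᶜ n s = spectralStayProb n n s := by
    rw [stayProb_of_notMem (by simp), spectralStayProb_self_left]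
  refine eq_of_discreteHeat (fun y s hy0 hyn ↦ ?_) (fun y s _ _ ↦ spectralStayProb_succ n y s)
    (fun y hy0 hyn ↦ ?_) h_left h_right t hx0 hxn
  · rw [stayProb_succ, Set.indicator_of_mem (h_mem hy0 hyn)]
  · obtain rfl | hy0 := hy0.eq_or_lt
    · exact h_left 0
    obtain rfl | hyn := hyn.eq_or_lt
    · exact h_right 0
    rw [stayProb_zero, Set.indicator_of_mem (h_mem hy0 hyn), Pi.one_apply,
      spectralStayProb_zero_right hy0 hyn]

theorem srw_not_hitting_probability_formula_general
    {Ω : Type*} [MeasurableSpace Ω] (P : ℤ → Measure Ω) (S : ℕ → Ω → ℤ)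
    (hS : IsSRW P S) (n : ℕ) (t : ℕ) (x : ℤ)
    (hx0 : 0 ≤ x) (hxn : x ≤ (n : ℤ)) :
    P x {ω | ∀ s ≤ t, S s ω ∉ ({0, (n : ℤ)} : Set ℤ)}
      = ENNReal.ofReal ((2 / (n : ℝ)) * ∑ j ∈ Finset.Icc 1 (n / 2),
          Real.cos (Real.pi * (2 * (j : ℝ) - 1) / n) ^ t
            * Real.cot (Real.pi * (2 * (j : ℝ) - 1) / (2 * n))
            * Real.sin (Real.pi * (x : ℝ) * (2 * (j : ℝ) - 1) / n)) := by
  rw [← spectralStayProb_eq_sum_Icc, ← stayProb_eq_spectralStayProb n t hx0 hxn]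
  exact hS.measure_forall_le_mem {0, (n : ℤ)}ᶜ x t

/-- for all `n ≥ 1`, `t ≥ 0` and `0 ≤ x ≤ n`, the probability
`h_n(x,t)` that the simple random walk started at `x` does not hit `{0, n}`
up to time `t` equals
`(2/n) Σ_{j=1}^{⌊n/2⌋} cos^t(π(2j-1)/n) cot(π(2j-1)/(2n)) sin(πx(2j-1)/n)`. -/
theorem srw_not_hitting_probability_formula
    {Ω : Type*} [MeasurableSpace Ω] (P : ℤ → Measure Ω) (S : ℕ → Ω → ℤ)
    (hS : IsSRW P S) (n : ℕ) (hn : 1 ≤ n) (t : ℕ) (x : ℤ)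
    (hx0 : 0 ≤ x) (hxn : x ≤ (n : ℤ)) :
    P x {ω | ∀ s ≤ t, S s ω ∉ ({0, (n : ℤ)} : Set ℤ)}
      = ENNReal.ofReal ((2 / (n : ℝ)) * ∑ j ∈ Finset.Icc 1 (n / 2),
          Real.cos (Real.pi * (2 * (j : ℝ) - 1) / n) ^ t
            * Real.cot (Real.pi * (2 * (j : ℝ) - 1) / (2 * n))
            * Real.sin (Real.pi * (x : ℝ) * (2 * (j : ℝ) - 1) / n)) :=
  srw_not_hitting_probability_formula_general P S hS n t x hx0 hxn
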